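/- arXiv:2112.05382 — 2 statements merged into one kernel-verified Lean document; each statement's English description precedes it below -/
import Mathlib

section
/- Let T be a real trigonometric polynomial of degree n with maximal absolute value M = |T(0)| > 0 attained at 0. Then for all x ∈ [-π/n, π/n], T(0) · T(x) ≥ |T(0)| · M cos(nx), i.e., if T(0) = M > 0 then T(x) ≥ M cos(nx) on [-π/n, π/n]. -/
/-!
Under `z = e^{ix}`, `e^{inx} f(x)` is a complex polynomial in `z` of degree at most `2n` for every
real trigonometric polynomial `f` of degree at most `n`, so such an `f ≠ 0` has at most `2n` zeros
in `[0, 2π)`, counted with multiplicity.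

If `|f| ≤ f 0` and `f x₀ < f 0 cos (n x₀)` for some `0 < x₀ < π/n`, then for small `ε > 0`,
`G = f 0 cos (n x) - f x + ε (cos (n x) - cos ((n - 1) x))` is positive at `x₀`, has the strict sign
`(-1)^j` at `jπ/n` for `1 ≤ j ≤ 2n - 1`, and has a double zero at the maximum `0` of `f`. The sign
changes give `2n - 1` zeros in `(0, 2π)`, so with the double zero `G` has `2n + 1` zeros and `G = 0`,
which is absurd. Negative `x` reduce to `x ↦ f (-x)`.
-/

open Real Finset Polynomial
open scoped Complex
open Complex (I)

theorem exists_zero_mem_Ioo_of_mul_neg {f : ℝ → ℝ} (hf : Continuous f) {u v : ℝ} (huv : u ≤ v)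
    (h : f u * f v < 0) : ∃ ξ ∈ Set.Ioo u v, f ξ = 0 := by
  rcases mul_neg_iff.1 h with ⟨hu, hv⟩ | ⟨hu, hv⟩
  · exact intermediate_value_Ioo' huv hf.continuousOn ⟨hv, hu⟩
  · exact intermediate_value_Ioo huv hf.continuousOn ⟨hu, hv⟩

theorem exists_card_eq_zeros_of_alternating {f : ℝ → ℝ} (hf : Continuous f) {y : ℕ → ℝ}
    (hy : StrictMono y) {m : ℕ} (hsign : ∀ j ≤ m, 0 < (-1) ^ j * f (y j)) :
    ∃ s : Finset ℝ, s.card = m ∧ ∀ x ∈ s, x ∈ Set.Ioo (y 0) (y m) ∧ f x = 0 := by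
  have hzero (j : Fin m) : ∃ ξ ∈ Set.Ioo (y j) (y (j + 1)), f ξ = 0 := by
    refine exists_zero_mem_Ioo_of_mul_neg hf (hy.monotone j.1.le_succ) ?_
    have h₁ := hsign j j.2.le
    have h₂ := hsign (j + 1) j.2
    rw [pow_succ] at h₂
    rcases neg_one_pow_eq_or ℝ j with h | h <;> rw [h] at h₁ h₂ <;> nlinarith
  choose ξ hξ hξ0 using hzero
  have hξmono : StrictMono ξ := fun i j hij =>
    (hξ i).2.trans ((hy.monotone (Nat.succ_le_of_lt hij)).trans_lt (hξ j).1)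
  refine ⟨univ.image ξ, by simp [card_image_of_injective _ hξmono.injective], ?_⟩
  simp only [mem_image, mem_univ, true_and, forall_exists_index, forall_apply_eq_imp_iff]
  exact fun j => ⟨⟨(hy.monotone j.1.zero_le).trans_lt (hξ j).1,
    (hξ j).2.trans_le (hy.monotone j.2)⟩, hξ0 j⟩

theorem cexp_neg_mul_mul_pow (n m : ℕ) (x : ℝ) :
    cexp (-(n * x) * I) * cexp (x * I) ^ m = cexp (((m : ℂ) - n) * x * I) := by
  rw [← Complex.exp_nat_mul, ← Complex.exp_add]; ring_nf

theorem injOn_cexp_mul_I_Ico : Set.InjOn (fun x : ℝ => cexp (x * I)) (Set.Ico 0 (2 * π)) :=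
  fun _ hx _ hy h => Circle.exp_injOn_Ico (by simp) hx hy (Circle.ext h)

theorem hasDerivAt_exp_mul_eval (n : ℕ) (P : ℂ[X]) (y : ℝ) :
    HasDerivAt (fun x : ℝ => cexp (-(n * x) * I) * P.eval (cexp (x * I)))
      (cexp (-(n * y) * I) * (-(n * I) * P.eval (cexp (y * I)) +
        I * cexp (y * I) * P.derivative.eval (cexp (y * I)))) y := by
  have h₁ : HasDerivAt (fun z : ℂ => cexp (-(n * z) * I))
      (cexp (-(n * y) * I) * (-(n * I))) y := by
    simpa [mul_assoc] using
      (((hasDerivAt_id (y : ℂ)).const_mul (n : ℂ)).neg.mul_const I).cexp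
  have h₂ : HasDerivAt (fun z : ℂ => P.eval (cexp (z * I)))
      (P.derivative.eval (cexp (y * I)) * (cexp (y * I) * I)) y := by
    simpa [Function.comp_def] using
      (P.hasDerivAt _).comp (y : ℂ) ((hasDerivAt_id (y : ℂ)).mul_const I).cexp
  exact ((h₁.mul h₂).comp_ofReal).congr_deriv (by ring)

theorem hasDerivAt_cos_mul_zero (c : ℝ) : HasDerivAt (fun x => cos (c * x)) 0 0 := by
  simpa using ((hasDerivAt_id (0 : ℝ)).const_mul c).cos

theorem neg_one_pow_mul_cos_perturbation_pos {M ε t y : ℝ} (ht : |t| ≤ M) (hε : 0 < ε)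
    (hy₀ : 0 < y) (hy : y < 2 * π) {n j : ℕ} (hn : 1 ≤ n) (hny : n * y = j * π) :
    0 < (-1) ^ j * (M * cos (n * y) - t + ε * (cos (n * y) - cos ((n - 1 : ℕ) * y))) := by
  have hcos : cos y < 1 := (cos_le_one y).lt_of_ne fun h =>
    hy₀.ne' ((cos_eq_one_iff_of_lt_of_lt (by linarith) hy).1 h)
  rw [Nat.cast_sub hn, Nat.cast_one, sub_one_mul, hny, cos_nat_mul_pi, cos_nat_mul_pi_sub]
  obtain ⟨ht₁, ht₂⟩ := abs_le.1 ht
  rcases neg_one_pow_eq_or ℝ j with h | h <;> rw [h] <;> nlinarith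

def trigPolyDegreeLE (n : ℕ) : Submodule ℝ (ℝ → ℝ) :=
  Submodule.span ℝ {f | ∃ k ≤ n, f = (fun x => cos (k * x)) ∨ f = (fun x => sin (k * x))}

namespace trigPolyDegreeLE

variable {n : ℕ} {f : ℝ → ℝ}

theorem cos_mem {k : ℕ} (hk : k ≤ n) : (fun x => cos (k * x)) ∈ trigPolyDegreeLE n :=
  Submodule.subset_span ⟨k, hk, .inl rfl⟩

theorem sin_mem {k : ℕ} (hk : k ≤ n) : (fun x => sin (k * x)) ∈ trigPolyDegreeLE n :=
  Submodule.subset_span ⟨k, hk, .inr rfl⟩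

theorem fourierSum_mem (a b : ℕ → ℝ) :
    (fun x => a 0 + ∑ k ∈ Icc 1 n, (a k * cos (k * x) + b k * sin (k * x)))
      ∈ trigPolyDegreeLE n := by
  have h : (fun x => a 0 + ∑ k ∈ Icc 1 n, (a k * cos (k * x) + b k * sin (k * x))) =
      a 0 • (fun x => cos ((0 : ℕ) * x)) +
        ∑ k ∈ Icc 1 n, (a k • (fun x => cos (k * x)) + b k • (fun x => sin (k * x))) := by
    ext x
    simp [Finset.sum_apply]
  rw [h]
  refine add_mem (Submodule.smul_mem _ _ (cos_mem n.zero_le)) (sum_mem fun k hk => ?_)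
  have hk : k ≤ n := (mem_Icc.1 hk).2
  exact add_mem (Submodule.smul_mem _ _ (cos_mem hk)) (Submodule.smul_mem _ _ (sin_mem hk))

theorem comp_neg_mem (hf : f ∈ trigPolyDegreeLE n) :
    (fun x => f (-x)) ∈ trigPolyDegreeLE n := by
  induction hf using Submodule.span_induction with
  | mem g hg =>
    obtain ⟨k, hk, rfl | rfl⟩ := hg
    · simpa only [mul_neg, cos_neg] using cos_mem hk
    · simp only [mul_neg, sin_neg]
      exact neg_mem (sin_mem hk)
  | zero => exact zero_mem _
  | add g h _ _ hg hh => exact add_mem hg hh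
  | smul c g _ hg => exact Submodule.smul_mem _ c hg

theorem differentiable_of_mem (hf : f ∈ trigPolyDegreeLE n) : Differentiable ℝ f := by
  induction hf using Submodule.span_induction with
  | mem g hg =>
    obtain ⟨k, -, rfl | rfl⟩ := hg <;> fun_prop
  | zero => exact differentiable_const 0
  | add g h _ _ hg hh => exact hg.add hh
  | smul c g _ hg => exact hg.const_smul c

theorem exists_polynomial (hf : f ∈ trigPolyDegreeLE n) :
    ∃ P : ℂ[X], P.natDegree ≤ 2 * n ∧
      ∀ x : ℝ, (f x : ℂ) = cexp (-(n * x) * I) * P.eval (cexp (x * I)) := by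
  induction hf using Submodule.span_induction with
  | mem g hg =>
    obtain ⟨k, hk, rfl | rfl⟩ := hg
    · refine ⟨C (1 / 2) * (X ^ (n + k) + X ^ (n - k)), ?_, fun x => ?_⟩
      · refine (natDegree_C_mul_le _ _).trans ((natDegree_add_le _ _).trans ?_)
        simp only [natDegree_X_pow]; omega
      · simp only [eval_mul, eval_C, eval_add, eval_pow, eval_X, mul_add,
          mul_left_comm _ (1 / 2 : ℂ), cexp_neg_mul_mul_pow]
        push_cast [Nat.cast_sub hk, Complex.cos]
        ring_nf
    · refine ⟨C (I / 2) * (X ^ (n - k) - X ^ (n + k)), ?_, fun x => ?_⟩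
      · refine (natDegree_C_mul_le _ _).trans ((natDegree_sub_le _ _).trans ?_)
        simp only [natDegree_X_pow]; omega
      · simp only [eval_mul, eval_C, eval_sub, eval_pow, eval_X, mul_sub,
          mul_left_comm _ (I / 2), cexp_neg_mul_mul_pow]
        push_cast [Nat.cast_sub hk, Complex.sin]
        ring_nf
  | zero => exact ⟨0, by simp⟩
  | add g h _ _ hg hh =>
    obtain ⟨P, hPd, hP⟩ := hg
    obtain ⟨Q, hQd, hQ⟩ := hh
    exact ⟨P + Q, (natDegree_add_le _ _).trans (max_le hPd hQd),
      fun x => by simp [hP, hQ, mul_add]⟩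
  | smul c g _ hg =>
    obtain ⟨P, hPd, hP⟩ := hg
    exact ⟨C (c : ℂ) * P, (natDegree_C_mul_le _ _).trans hPd,
      fun x => by simp [hP, mul_left_comm]⟩

theorem eq_zero_of_card_zeros (hf : f ∈ trigPolyDegreeLE n) (h0 : f 0 = 0)
    (h0' : HasDerivAt f 0 0) {s : Finset ℝ} (hs : ∀ x ∈ s, x ∈ Set.Ioo 0 (2 * π) ∧ f x = 0)
    (hcard : 2 * n < s.card + 2) : f = 0 := by
  obtain ⟨P, hPdeg, hP⟩ := exists_polynomial hf
  by_contra hf0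
  have hP0 : P ≠ 0 := by
    rintro rfl
    exact hf0 (funext fun x => Complex.ofReal_injective ((hP x).trans (by simp)))
  have hP1 : P.IsRoot 1 := by simpa [h0] using (hP 0).symm
  have hP1' : P.derivative.IsRoot 1 := by
    have hderiv := h0'.ofReal_comp
    rw [funext hP] at hderiv
    simpa [hP1.eq_zero] using hderiv.unique (hasDerivAt_exp_mul_eval n P 0)
  obtain ⟨Q, rfl⟩ : (X - C 1) ^ 2 ∣ P :=
    (le_rootMultiplicity_iff hP0).1 ((one_lt_rootMultiplicity_iff_isRoot hP0).2 ⟨hP1, hP1'⟩)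
  have hQ0 : Q ≠ 0 := right_ne_zero_of_mul hP0
  let e : ℝ → ℂ := fun x => cexp (x * I)
  have he : Set.InjOn e (Set.Ioo 0 (2 * π)) := injOn_cexp_mul_I_Ico.mono Set.Ioo_subset_Ico_self
  have hroots : (s.image e).val ≤ Q.roots := by
    refine (Multiset.le_iff_subset (s.image e).nodup).2 fun z hz => ?_
    obtain ⟨x, hx, rfl⟩ := Finset.mem_image.1 hz
    have hx1 : e x ≠ 1 := fun h =>
      (hs x hx).1.1.ne' (injOn_cexp_mul_I_Ico (Set.Ioo_subset_Ico_self (hs x hx).1)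
        ⟨le_rfl, by positivity⟩ (h.trans (by simp)))
    have := (hP x).symm
    simp only [(hs x hx).2, Complex.ofReal_zero, mul_eq_zero, Complex.exp_ne_zero, false_or,
      eval_mul, eval_pow, eval_sub, eval_X, eval_C, pow_eq_zero_iff two_ne_zero,
      sub_eq_zero] at this
    exact (mem_roots hQ0).2 (this.resolve_left hx1)
  have hcardQ : s.card ≤ Q.natDegree := by
    rw [← card_image_of_injOn (he.mono fun x hx => (hs x hx).1)]
    exact (Multiset.card_le_card hroots).trans (card_roots' Q)
  rw [natDegree_mul (pow_ne_zero 2 (X_sub_C_ne_zero 1)) hQ0, natDegree_pow,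
    natDegree_X_sub_C] at hPdeg
  omega

theorem not_alternating (hf : f ∈ trigPolyDegreeLE n) (h0 : f 0 = 0) (h0' : HasDerivAt f 0 0)
    {y : ℕ → ℝ} (hy : StrictMono y) (hy₀ : 0 < y 0) (hy2π : y (2 * n - 1) < 2 * π) :
    ¬ ∀ j ≤ 2 * n - 1, 0 < (-1) ^ j * f (y j) := by
  intro hsign
  obtain ⟨s, hs, hzeros⟩ :=
    exists_card_eq_zeros_of_alternating (differentiable_of_mem hf).continuous hy hsign
  have hf0 : f = 0 := eq_zero_of_card_zeros hf h0 h0'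
    (fun x hx => ⟨⟨hy₀.trans (hzeros x hx).1.1, (hzeros x hx).1.2.trans hy2π⟩, (hzeros x hx).2⟩)
    (by omega)
  simpa [hf0] using hsign 0 (Nat.zero_le _)

theorem hasDerivAt_zero_of_abs_le (hf : f ∈ trigPolyDegreeLE n) (hmax : ∀ x, |f x| ≤ f 0) :
    HasDerivAt f 0 0 := by
  have hloc : IsLocalMax f 0 := .of_forall fun x => (le_abs_self _).trans (hmax x)
  simpa [hloc.deriv_eq_zero] using (differentiable_of_mem hf 0).hasDerivAt

theorem mul_cos_le_of_mem_Ioo (hf : f ∈ trigPolyDegreeLE n) (hmax : ∀ x, |f x| ≤ f 0) {x₀ : ℝ}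
    (hx₀ : x₀ ∈ Set.Ioo 0 (π / n)) : f 0 * cos (n * x₀) ≤ f x₀ := by
  obtain ⟨hx₀, hx₀π⟩ := hx₀
  have hn : 1 ≤ n := Nat.one_le_iff_ne_zero.2 fun h => by simp [h] at hx₀π; linarith
  have hnR : (0 : ℝ) < n := by exact_mod_cast hn
  by_contra! hlt
  set v := cos (n * x₀) - cos ((n - 1 : ℕ) * x₀)
  obtain ⟨ε, hε, hεv⟩ := exists_pos_mul_lt (sub_pos.2 hlt) |v|
  set G : ℝ → ℝ := fun x => f 0 * cos (n * x) - f x + ε * (cos (n * x) - cos ((n - 1 : ℕ) * x))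
  have hGmem : G ∈ trigPolyDegreeLE n :=
    add_mem (sub_mem (Submodule.smul_mem _ _ (cos_mem le_rfl)) hf)
      (Submodule.smul_mem _ ε (sub_mem (cos_mem le_rfl) (cos_mem (n.sub_le 1))))
  have hG0' : HasDerivAt G 0 0 :=
    ((((hasDerivAt_cos_mul_zero _).const_mul (f 0)).sub (hasDerivAt_zero_of_abs_le hf hmax)).add
      (((hasDerivAt_cos_mul_zero _).sub (hasDerivAt_cos_mul_zero _)).const_mul ε)).congr_deriv
      (by ring)
  set y : ℕ → ℝ := fun j => if j = 0 then x₀ else j * π / n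
  have hy : StrictMono y := strictMono_nat_of_lt_succ fun j => by
    rcases j with _ | j
    · simpa [y] using hx₀π
    · simp only [y, Nat.succ_ne_zero, if_false]
      gcongr
      linarith
  have hy2π {j : ℕ} (hj : j < 2 * n) : j * π / n < 2 * π := by
    rw [div_lt_iff₀ hnR]
    have : (j : ℝ) < 2 * n := by exact_mod_cast hj
    nlinarith [pi_pos]
  refine not_alternating hGmem (by simp [G]) hG0' hy hx₀ ?_ fun j hj => ?_
  · simpa [y, if_neg (by omega : 2 * n - 1 ≠ 0)] using hy2π (by omega)
  rcases j with _ | j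
  · have := neg_abs_le v
    simp only [y, G, pow_zero, one_mul, if_true]
    nlinarith
  · simp only [y, Nat.succ_ne_zero, if_false]
    exact neg_one_pow_mul_cos_perturbation_pos (hmax _) hε (by positivity) (hy2π (by omega)) hn
      (by field_simp)

theorem mul_cos_le (hf : f ∈ trigPolyDegreeLE n) (hmax : ∀ x, |f x| ≤ f 0) {x : ℝ}
    (hx : x ∈ Set.Icc 0 (π / n)) : f 0 * cos (n * x) ≤ f x := by
  obtain ⟨hx₀, hxπ⟩ := hx
  rcases hx₀.eq_or_lt with rfl | hx₀
  · simp
  rcases hxπ.eq_or_lt with rfl | hxπ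
  · have hn : (n : ℝ) ≠ 0 := fun h => by simp [h] at hx₀
    rw [mul_div_cancel₀ _ hn, cos_pi, mul_neg_one]
    exact neg_le_of_abs_le (hmax _)
  exact mul_cos_le_of_mem_Ioo hf hmax ⟨hx₀, hxπ⟩

end trigPolyDegreeLE

theorem trig_poly_cos_lower_bound_general
    (n : ℕ) (a b : ℕ → ℝ) (M : ℝ)
    (T : ℝ → ℝ)
    (hT : ∀ x, T x = a 0 + ∑ k ∈ Finset.Icc 1 n, (a k * Real.cos (k * x) + b k * Real.sin (k * x)))
    (hT0 : T 0 = M)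
    (hmax : ∀ x, |T x| ≤ M) :
    ∀ x ∈ Set.Icc (-(π / n)) (π / n), T x ≥ M * Real.cos (n * x) := by
  have hmem : T ∈ trigPolyDegreeLE n := funext hT ▸ trigPolyDegreeLE.fourierSum_mem a b
  subst hT0
  intro x ⟨hx₁, hx₂⟩
  rcases le_total 0 x with hx | hx
  · exact trigPolyDegreeLE.mul_cos_le hmem hmax ⟨hx, hx₂⟩
  · have h := trigPolyDegreeLE.mul_cos_le (trigPolyDegreeLE.comp_neg_mem hmem)
      (by simpa using fun y => hmax (-y)) (x := -x) ⟨by linarith, by linarith⟩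
    simpa [mul_neg] using h

/-- If a trigonometric polynomial `T` of degree `n` satisfies `T 0 = M > 0` and
`|T x| ≤ M` for all `x`, then `T x ≥ M cos (n x)` on `[-π/n, π/n]`. -/
theorem trig_poly_cos_lower_bound
    (n : ℕ) (hn : 1 ≤ n) (a b : ℕ → ℝ) (M : ℝ)
    (T : ℝ → ℝ)
    (hT : ∀ x, T x = a 0 + ∑ k ∈ Finset.Icc 1 n, (a k * Real.cos (k * x) + b k * Real.sin (k * x)))
    (hT0 : T 0 = M) (hMpos : 0 < M)
    (hmax : ∀ x, |T x| ≤ M) :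
    ∀ x ∈ Set.Icc (-(π / n)) (π / n), T x ≥ M * Real.cos (n * x) :=
  trig_poly_cos_lower_bound_general n a b M T hT hT0 hmax
end

section
/- Let P₁,…,P_N ∈ ℂ[z₁,…,z_d] be nonzero homogeneous polynomials and δ₁,…,δ_N > 0 satisfy Σ_k δ_k² · deg P_k ≤ 1. If p ∈ S^{2d-1} maximizes the function x ↦ ∏_k |P_k(x)|^{δ_k²} on the unit sphere, then for every k, every zero q ∈ S^{2d-1} of P_k satisfies arccos|⟨p,q⟩| ≥ arcsin δ_k. -/
/-!
Put `w_j = δ_j²` and `F(x) = ∏ |P_j(x)|^{w_j}`. Since `F` is homogeneous of degree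
`H = ∑ w_j deg P_j`, maximality of `p` on the sphere gives `F(x) ≤ F(p) ‖x‖^H` for all `x ≠ 0`.
Write `p = r + γ q` with `r ⊥ q` and `|γ| = |⟨q, p⟩| = t`, so that
`F(r + ζ q) ≤ F(p) (‖r‖² + |ζ|²)^{H/2}`. In the variable `η = 1/ζ` the functions
`P_j(q + η r) = η^{deg P_j} P_j(r + η⁻¹ q)` are polynomials, and the one for `j = k` vanishes at
`η = 0`. The maximum modulus principle for `|η|^{-w_k} ∏ |P_j(q + η r)|^{w_j}` on the disc
`|η| ≤ 1/ρ`, which contains `η = 1/γ` as soon as `ρ ≤ t`, yields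
`t^{w_k - H} ≤ ρ^{w_k - H} (‖r‖² + ρ²)^{H/2}` for every `ρ ≤ t`. Optimising over `ρ` shows
`1 - t² = ‖r‖² ≥ w_k / H ≥ δ_k²`, that is, `arccos t ≥ arcsin δ_k`.
-/

open Real Finset Polynomial
open scoped InnerProductSpace

lemma MvPolynomial.IsHomogeneous.eval_smul {R σ : Type*} [CommSemiring R]
    {P : MvPolynomial σ R} {m : ℕ} (hP : P.IsHomogeneous m) (c : R) (x : σ → R) :
    eval (c • x) P = c ^ m * eval x P := by
  simp only [eval_eq, Finset.mul_sum, Pi.smul_apply, smul_eq_mul, mul_pow,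
    prod_mul_distrib, prod_pow_eq_pow_sum]
  refine sum_congr rfl fun d hd => ?_
  have hdeg : ∑ i ∈ d.support, d i = m := by
    simp [← hP (mem_support_iff.mp hd), ← Finsupp.degree_apply, Finsupp.degree_eq_weight_one,
      Pi.one_def]
  rw [hdeg]
  ring

lemma MvPolynomial.IsHomogeneous.ne_zero_of_eval {R σ : Type*} [CommSemiring R]
    {P : MvPolynomial σ R} {m : ℕ} (hP : P.IsHomogeneous m) {x y : σ → R}
    (hx : eval x P = 0) (hy : eval y P ≠ 0) : m ≠ 0 := by
  rintro rfl
  have hx0 := hP.eval_smul 0 x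
  have hy0 := hP.eval_smul 0 y
  rw [zero_smul, pow_zero, one_mul] at hx0 hy0
  exact hy (hy0 ▸ hx0 ▸ hx)

noncomputable def MvPolynomial.lineRestriction {R σ : Type*} [CommSemiring R]
    (P : MvPolynomial σ R) (a b : σ → R) : R[X] :=
  aeval (fun i => Polynomial.C (a i) + Polynomial.X * Polynomial.C (b i)) P

lemma MvPolynomial.eval_lineRestriction {R σ : Type*} [CommSemiring R] (P : MvPolynomial σ R)
    (a b : σ → R) (η : R) : (P.lineRestriction a b).eval η = eval (a + η • b) P := by
  rw [lineRestriction, aeval_def, polynomial_eval_eval₂]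
  congr 1
  · ext c; simp
  · ext i; simp [mul_comm η]

lemma pow_natCeil_le_rpow_mul_max {v a : ℝ} (hv : 0 ≤ v) (ha : 0 ≤ a) :
    v ^ ⌈a⌉₊ ≤ v ^ a * max 1 v := by
  rw [← rpow_natCast]
  rcases le_total 1 v with h1 | h1
  · rw [max_eq_right h1, ← rpow_add_one (by positivity)]
    exact rpow_le_rpow_of_exponent_le h1 (Nat.ceil_lt_add_one ha).le
  · rw [max_eq_left h1, mul_one]
    exact rpow_le_rpow_of_exponent_ge' hv h1 ha (Nat.le_ceil a)

lemma rpow_mul_min_le_pow_natCeil {v a : ℝ} (hv : 0 ≤ v) (ha : 0 ≤ a) :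
    v ^ a * min 1 v ≤ v ^ ⌈a⌉₊ := by
  rw [← rpow_natCast]
  rcases le_total 1 v with h1 | h1
  · rw [min_eq_left h1, mul_one]
    exact rpow_le_rpow_of_exponent_le h1 (Nat.le_ceil a)
  · rw [min_eq_right h1]
    rcases hv.eq_or_lt with rfl | hv0
    · rw [mul_zero]; positivity
    · rw [← rpow_add_one hv0.ne']
      exact rpow_le_rpow_of_exponent_ge' hv h1 (by positivity) (Nat.ceil_lt_add_one ha).le

lemma le_of_forall_pow_mul_le {A C c K : ℝ} (hC : 0 ≤ C) (hc : 0 < c)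
    (h : ∀ n : ℕ, A ^ n * c ≤ C ^ n * K) : A ≤ C := by
  by_contra! hCA
  rcases hC.eq_or_lt with rfl | hC0
  · have := h 1
    simp only [pow_one, zero_mul] at this
    nlinarith
  · obtain ⟨n, hn⟩ := pow_unbounded_of_one_lt (K / c) ((one_lt_div hC0).2 hCA)
    rw [div_pow, div_lt_div_iff₀ hc (pow_pos hC0 n)] at hn
    linarith [h n]

lemma Complex.norm_le_of_forall_norm_eq {f : ℂ → ℂ} (hf : Differentiable ℂ f) {R C : ℝ}
    (hR : 0 < R) (hC : ∀ η : ℂ, ‖η‖ = R → ‖f η‖ ≤ C) {z : ℂ} (hz : ‖z‖ ≤ R) : ‖f z‖ ≤ C := by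
  refine Complex.norm_le_of_forall_mem_frontier_norm_le (U := Metric.ball 0 R)
    Metric.isBounded_ball hf.diffContOnCl (fun η hη => hC η ?_) ?_
  · rwa [frontier_ball 0 hR.ne', mem_sphere_zero_iff_norm] at hη
  · rwa [closure_ball 0 hR.ne', mem_closedBall_zero_iff]

section WeightedMaxModulus

variable {ι : Type*} [Fintype ι]

lemma norm_eval_prod_pow (g : ι → ℂ[X]) (e : ι → ℕ) (η : ℂ) :
    ‖(∏ j, g j ^ e j).eval η‖ = ∏ j, ‖(g j).eval η‖ ^ e j := by
  simp only [eval_prod, eval_pow, norm_prod, norm_pow]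

variable {g : ι → ℂ[X]}

/-- For rational weights this is the maximum modulus principle for a product of powers of the
`g j`; real weights are reached by applying it to `∏ g_j ^ ⌈n w_j⌉` and letting `n → ∞`. -/
lemma prod_norm_eval_rpow_le_of_forall_norm_eq {w : ι → ℝ} (hw : ∀ j, 0 < w j) {R C : ℝ}
    (hR : 0 < R) (hC : ∀ η : ℂ, ‖η‖ = R → ∏ j, ‖(g j).eval η‖ ^ w j ≤ C) {z : ℂ}
    (hz : ‖z‖ ≤ R) : ∏ j, ‖(g j).eval z‖ ^ w j ≤ C := by
  have hC0 : 0 ≤ C := (prod_nonneg fun j _ => by positivity).trans (hC R (by simp [hR.le]))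
  by_cases hz0 : ∃ j, (g j).eval z = 0
  · obtain ⟨j, hj⟩ := hz0
    rwa [prod_eq_zero (mem_univ j) (by rw [hj, norm_zero, zero_rpow (hw j).ne'])]
  push Not at hz0
  obtain ⟨K, hK⟩ := (isCompact_sphere (0 : ℂ) R).exists_bound_of_continuousOn
    (f := fun η => ∏ j, max 1 ‖(g j).eval η‖) (by fun_prop)
  refine le_of_forall_pow_mul_le hC0 (c := ∏ j, min 1 ‖(g j).eval z‖) (K := K)
    (prod_pos fun j _ => lt_min one_pos (norm_pos_iff.2 (hz0 j))) fun n => ?_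
  calc (∏ j, ‖(g j).eval z‖ ^ w j) ^ n * ∏ j, min 1 ‖(g j).eval z‖
      = ∏ j, ‖(g j).eval z‖ ^ (w j * n) * min 1 ‖(g j).eval z‖ := by
        simp only [← prod_pow, ← prod_mul_distrib, rpow_mul_natCast (norm_nonneg _)]
    _ ≤ ∏ j, ‖(g j).eval z‖ ^ ⌈w j * n⌉₊ :=
        prod_le_prod (fun j _ => by positivity)
          fun j _ => rpow_mul_min_le_pow_natCeil (norm_nonneg _) (by positivity [hw j])
    _ = ‖(∏ j, g j ^ ⌈w j * n⌉₊).eval z‖ := (norm_eval_prod_pow g _ z).symm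
    _ ≤ C ^ n * K := by
        refine Complex.norm_le_of_forall_norm_eq (Polynomial.differentiable _) hR
          (fun η hη => ?_) hz
        calc ‖(∏ j, g j ^ ⌈w j * n⌉₊).eval η‖
            = ∏ j, ‖(g j).eval η‖ ^ ⌈w j * n⌉₊ := norm_eval_prod_pow g _ η
          _ ≤ ∏ j, ‖(g j).eval η‖ ^ (w j * n) * max 1 ‖(g j).eval η‖ :=
              prod_le_prod (fun j _ => by positivity)
                fun j _ => pow_natCeil_le_rpow_mul_max (norm_nonneg _) (by positivity [hw j])
          _ = (∏ j, ‖(g j).eval η‖ ^ w j) ^ n * ∏ j, max 1 ‖(g j).eval η‖ := by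
              simp only [← prod_pow, ← prod_mul_distrib, rpow_mul_natCast (norm_nonneg _)]
          _ ≤ C ^ n * K := by
              gcongr
              · exact hC η hη
              · exact (le_abs_self _).trans (hK η (mem_sphere_zero_iff_norm.2 hη))

lemma norm_eval_divX_mul {p : ℂ[X]} (hp : p.eval 0 = 0) (η : ℂ) :
    ‖(divX p).eval η‖ * ‖η‖ = ‖p.eval η‖ := by
  conv_rhs => rw [← divX_mul_X_add p]
  rw [coeff_zero_eq_eval_zero, hp, eval_add, eval_mul, eval_X, eval_C, add_zero, norm_mul]

lemma prod_norm_eval_rpow_ite_divX [DecidableEq ι] {k : ι} (hk : (g k).eval 0 = 0)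
    (w : ι → ℝ) (η : ℂ) :
    (∏ j, ‖(if j = k then divX (g k) else g j).eval η‖ ^ w j) * ‖η‖ ^ w k =
      ∏ j, ‖(g j).eval η‖ ^ w j := by
  rw [Fintype.prod_eq_mul_prod_compl k,
    Fintype.prod_eq_mul_prod_compl k (fun j => ‖(g j).eval η‖ ^ w j), if_pos rfl,
    ← norm_eval_divX_mul hk, mul_rpow (norm_nonneg _) (norm_nonneg _),
    prod_congr rfl fun j hj => by rw [if_neg (mem_compl.1 hj ∘ mem_singleton.2)]]
  ring

end WeightedMaxModulus

section InnerProductSpace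

variable {E : Type*} [NormedAddCommGroup E] [InnerProductSpace ℂ E] {q : E}

lemma inner_sub_inner_smul_eq_zero (hq : ‖q‖ = 1) (p : E) : ⟪q, p - ⟪q, p⟫_ℂ • q⟫_ℂ = 0 := by
  rw [inner_sub_right, inner_smul_right, inner_self_eq_norm_sq_to_K, hq]
  simp

lemma norm_add_smul_sq (hq : ‖q‖ = 1) {r : E} (hqr : ⟪q, r⟫_ℂ = 0) (ζ : ℂ) :
    ‖r + ζ • q‖ ^ 2 = ‖r‖ ^ 2 + ‖ζ‖ ^ 2 := by
  have hrq : ⟪r, ζ • q⟫_ℂ = 0 := by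
    rw [inner_smul_right, ← inner_conj_symm, hqr, map_zero, mul_zero]
  rw [norm_add_sq (𝕜 := ℂ), hrq, map_zero, mul_zero, add_zero, norm_smul, hq, mul_one]

end InnerProductSpace

lemma exists_norm_eq_one_forall_eval_ne_zero {ι n : Type*} [Fintype ι] [Fintype n] [Nonempty n]
    {P : ι → MvPolynomial n ℂ} {m : ι → ℕ} (hP : ∀ j, (P j).IsHomogeneous (m j))
    (hP0 : ∀ j, P j ≠ 0) :
    ∃ y : EuclideanSpace ℂ n, ‖y‖ = 1 ∧ ∀ j, MvPolynomial.eval y.ofLp (P j) ≠ 0 := by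
  obtain ⟨i⟩ := ‹Nonempty n›
  -- the factor `X i` makes the point found nonzero, so that it can be normalised
  obtain ⟨z, hz⟩ : ∃ z, MvPolynomial.eval z (MvPolynomial.X i * ∏ j, P j) ≠ 0 := by
    by_contra! h
    exact mul_ne_zero (MvPolynomial.X_ne_zero i) (prod_ne_zero_iff.2 fun j _ => hP0 j)
      (MvPolynomial.funext fun z => by simpa using h z)
  simp only [map_mul, map_prod, MvPolynomial.eval_X, mul_ne_zero_iff, prod_ne_zero_iff] at hz
  set x : EuclideanSpace ℂ n := WithLp.toLp 2 z
  have hx : x ≠ 0 := fun h => hz.1 (by simpa using congrArg (fun v : EuclideanSpace ℂ n => v i) h)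
  refine ⟨(‖x‖ : ℂ)⁻¹ • x, ?_, fun j => ?_⟩
  · rw [norm_smul, norm_inv, Complex.norm_real, norm_norm, inv_mul_cancel₀ (norm_ne_zero_iff.2 hx)]
  · rw [WithLp.ofLp_smul, (hP j).eval_smul]
    exact mul_ne_zero (pow_ne_zero _ (by simpa using hx)) (hz.2 j (mem_univ j))

section WeightedProd

variable {ι n : Type*} [Fintype ι]

noncomputable def weightedProd (P : ι → MvPolynomial n ℂ) (w : ι → ℝ) (x : n → ℂ) : ℝ :=
  ∏ j, ‖MvPolynomial.eval x (P j)‖ ^ w j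

variable {P : ι → MvPolynomial n ℂ} {w : ι → ℝ} {m : ι → ℕ}

lemma weightedProd_pos_iff (hw : ∀ j, w j ≠ 0) {x : n → ℂ} :
    0 < weightedProd P w x ↔ ∀ j, MvPolynomial.eval x (P j) ≠ 0 := by
  refine ⟨fun h j hj => h.ne' (prod_eq_zero (mem_univ j) ?_), fun h =>
    prod_pos fun j _ => rpow_pos_of_pos (norm_pos_iff.2 (h j)) _⟩
  rw [hj, norm_zero, zero_rpow (hw j)]

lemma weightedProd_smul (hP : ∀ j, (P j).IsHomogeneous (m j)) (hw : ∀ j, 0 ≤ w j) (c : ℂ)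
    (x : n → ℂ) : weightedProd P w (c • x) = ‖c‖ ^ (∑ j, w j * m j) * weightedProd P w x := by
  simp only [weightedProd, (hP _).eval_smul, norm_mul, norm_pow,
    mul_rpow (pow_nonneg (norm_nonneg c) _) (norm_nonneg _), prod_mul_distrib]
  rw [rpow_sum_of_nonneg (norm_nonneg c) fun j _ => by positivity [hw j]]
  simp only [← rpow_natCast, ← rpow_mul (norm_nonneg c), mul_comm]

lemma weightedProd_le_mul_norm_rpow [Fintype n] (hP : ∀ j, (P j).IsHomogeneous (m j))
    (hw : ∀ j, 0 ≤ w j) {p : EuclideanSpace ℂ n}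
    (hmax : ∀ y : EuclideanSpace ℂ n, ‖y‖ = 1 → weightedProd P w y ≤ weightedProd P w p)
    {x : EuclideanSpace ℂ n} (hx : x ≠ 0) :
    weightedProd P w x ≤ weightedProd P w p * ‖x‖ ^ (∑ j, w j * m j) := by
  have hx0 : ‖x‖ ≠ 0 := norm_ne_zero_iff.2 hx
  have h := hmax ((‖x‖ : ℂ)⁻¹ • x)
    (by rw [norm_smul, norm_inv, Complex.norm_real, norm_norm, inv_mul_cancel₀ hx0])
  rwa [WithLp.ofLp_smul, weightedProd_smul hP hw, norm_inv, Complex.norm_real, norm_norm,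
    inv_rpow (norm_nonneg x), inv_mul_le_iff₀ (by positivity), mul_comm] at h

end WeightedProd

lemma div_le_of_forall_rpow_le {s t w H : ℝ} (hs : 0 < s) (ht : 0 < t) (hst : s + t ^ 2 = 1)
    (hw : 0 < w) (hwH : w ≤ H)
    (h : ∀ ρ, 0 < ρ → ρ ≤ t → t ^ (w - H) ≤ ρ ^ (w - H) * (s + ρ ^ 2) ^ (H / 2)) :
    w / H ≤ s := by
  have hH : 0 < H := hw.trans_le hwH
  by_contra! hsκ
  have hκ1 : w / H ≤ 1 := (div_le_one hH).2 hwH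
  obtain ⟨σ, hsσ, hσκ⟩ := exists_between hsκ
  have hσ : 0 < σ := hs.trans hsσ
  have h1σ : 0 < 1 - σ := by linarith [hσκ.trans_le hκ1]
  have h1s : 0 < 1 - s := by linarith
  have hHσ : H * σ ≤ w := by
    rw [lt_div_iff₀ hH, mul_comm] at hσκ
    exact hσκ.le
  -- With `a = s / σ` and `b = (1 - s) / (1 - σ)` this radius gives `s + ρ² = a` and
  -- `(t / ρ)² = b / a`, so that `h` contradicts `σ log a + (1 - σ) log b < log 1`.
  set ρ := √(s * (1 - σ) / σ)
  have hρ2 : ρ ^ 2 = s * (1 - σ) / σ := sq_sqrt (by positivity)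
  have hρ : 0 < ρ := sqrt_pos.2 (by positivity)
  have hρt : ρ ≤ t := by
    rw [← sqrt_sq ht.le]
    refine sqrt_le_sqrt ?_
    rw [div_le_iff₀ hσ]
    nlinarith
  set La := log (s / σ)
  set Lb := log ((1 - s) / (1 - σ))
  have hconc : σ * La + (1 - σ) * Lb < 0 := by
    have := strictConcaveOn_log_Ioi.2 (x := s / σ) (y := (1 - s) / (1 - σ))
      (div_pos hs hσ) (div_pos h1s h1σ)
      (by
        rw [Ne, div_eq_div_iff hσ.ne' h1σ.ne']
        intro hab; nlinarith)
      hσ h1σ (by ring)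
    have e : σ • (s / σ) + (1 - σ) • ((1 - s) / (1 - σ)) = 1 := by
      simp only [smul_eq_mul]; field_simp; ring
    rwa [e, log_one] at this
  have hlogs : log (s + ρ ^ 2) = La := by
    congr 1; rw [hρ2]; field_simp; ring
  have hlogt : 2 * (log t - log ρ) = Lb - La := by
    have e : (t / ρ) ^ 2 = ((1 - s) / (1 - σ)) / (s / σ) := by
      rw [div_pow, hρ2, show t ^ 2 = 1 - s by linarith]
      field_simp
    calc 2 * (log t - log ρ) = log ((t / ρ) ^ 2) := by
          rw [log_pow, log_div ht.ne' hρ.ne']; norm_num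
      _ = Lb - La := by rw [e, log_div (div_pos h1s h1σ).ne' (div_pos hs hσ).ne']
  have hlog := log_le_log (by positivity) (h ρ hρ hρt)
  rw [log_mul (by positivity) (by positivity), log_rpow ht, log_rpow hρ, log_rpow (by positivity),
    hlogs] at hlog
  have hmono : 0 ≤ (w - H * σ) * (log t - log ρ) :=
    mul_nonneg (by linarith) (by linarith [log_le_log hρ hρt])
  nlinarith [mul_pos hH (neg_pos.2 hconc)]

section ZeroAvoidance

variable {ι n : Type*} [Fintype ι] {P : ι → MvPolynomial n ℂ} {w : ι → ℝ} {m : ι → ℕ}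

lemma prod_norm_eval_lineRestriction_rpow (hP : ∀ j, (P j).IsHomogeneous (m j))
    (hw : ∀ j, 0 ≤ w j) (a b : n → ℂ) {η : ℂ} (hη : η ≠ 0) :
    ∏ j, ‖((P j).lineRestriction a b).eval η‖ ^ w j =
      ‖η‖ ^ (∑ j, w j * m j) * weightedProd P w (b + η⁻¹ • a) := by
  simp only [MvPolynomial.eval_lineRestriction]
  rw [← weightedProd_smul hP hw, smul_add, smul_smul, mul_inv_cancel₀ hη, one_smul, add_comm]
  rfl

lemma rpow_mul_weightedProd_le [Fintype n] [DecidableEq ι]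
    (hP : ∀ j, (P j).IsHomogeneous (m j)) (hw : ∀ j, 0 < w j) {M : ℝ}
    (hbound : ∀ x : EuclideanSpace ℂ n, x ≠ 0 →
      weightedProd P w x ≤ M * ‖x‖ ^ (∑ j, w j * m j))
    {q r : EuclideanSpace ℂ n} (hq : ‖q‖ = 1) (hqr : ⟪q, r⟫_ℂ = 0) {k : ι}
    (hk : MvPolynomial.eval q.ofLp (P k) = 0) {γ : ℂ} {ρ : ℝ} (hρ : 0 < ρ) (hργ : ρ ≤ ‖γ‖) :
    ‖γ‖ ^ (w k - ∑ j, w j * m j) * weightedProd P w (r + γ • q) ≤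
      ρ ^ (w k - ∑ j, w j * m j) * (M * (‖r‖ ^ 2 + ρ ^ 2) ^ ((∑ j, w j * m j) / 2)) := by
  set H := ∑ j, w j * m j
  set g := fun j => (P j).lineRestriction q r
  have hg : (g k).eval 0 = 0 := by simp [g, MvPolynomial.eval_lineRestriction, hk]
  have key : ∀ η : ℂ, η ≠ 0 → ∏ j, ‖(if j = k then divX (g k) else g j).eval η‖ ^ w j =
      ‖η‖ ^ (H - w k) * weightedProd P w (r + η⁻¹ • q) := by
    intro η hη
    have h := prod_norm_eval_rpow_ite_divX hg w η
    rw [prod_norm_eval_lineRestriction_rpow hP (fun j => (hw j).le) _ _ hη] at h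
    rw [rpow_sub (norm_pos_iff.2 hη), div_mul_eq_mul_div, eq_div_iff (by positivity), h]
  have hcircle : ∀ η : ℂ, ‖η‖ = ρ⁻¹ →
      ∏ j, ‖(if j = k then divX (g k) else g j).eval η‖ ^ w j ≤
        ρ ^ (w k - H) * (M * (‖r‖ ^ 2 + ρ ^ 2) ^ (H / 2)) := by
    intro η hη
    have hη0 : η ≠ 0 := by
      rintro rfl
      rw [norm_zero] at hη
      exact (inv_pos.2 hρ).ne hη
    have hx : ‖r + η⁻¹ • q‖ ^ 2 = ‖r‖ ^ 2 + ρ ^ 2 := by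
      rw [norm_add_smul_sq hq hqr, norm_inv, hη, inv_inv]
    have hx0 : r + η⁻¹ • q ≠ 0 := by
      intro h
      rw [h, norm_zero] at hx
      nlinarith [sq_nonneg ‖r‖]
    rw [key η hη0, hη, inv_rpow hρ.le, ← rpow_neg hρ.le, neg_sub]
    gcongr
    calc weightedProd P w (r + η⁻¹ • q) ≤ M * ‖r + η⁻¹ • q‖ ^ H := hbound _ hx0
      _ = M * (‖r‖ ^ 2 + ρ ^ 2) ^ (H / 2) := by
        rw [← hx, ← rpow_natCast, ← rpow_mul (norm_nonneg _), Nat.cast_ofNat,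
          mul_div_cancel₀ _ two_ne_zero]
  have hγ : γ ≠ 0 := norm_pos_iff.1 (hρ.trans_le hργ)
  have h := prod_norm_eval_rpow_le_of_forall_norm_eq hw (inv_pos.2 hρ) hcircle
    (z := γ⁻¹) (by rw [norm_inv]; exact inv_anti₀ hρ hργ)
  rwa [key _ (inv_ne_zero hγ), inv_inv, norm_inv, inv_rpow (norm_nonneg _),
    ← rpow_neg (norm_nonneg _), neg_sub] at h

lemma norm_inner_sq_le_one_sub_div [Fintype n] [DecidableEq ι]
    (hP : ∀ j, (P j).IsHomogeneous (m j)) (hw : ∀ j, 0 < w j) {p q : EuclideanSpace ℂ n}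
    (hp : ‖p‖ = 1) (hq : ‖q‖ = 1) (hpos : 0 < weightedProd P w p)
    (hbound : ∀ x : EuclideanSpace ℂ n, x ≠ 0 →
      weightedProd P w x ≤ weightedProd P w p * ‖x‖ ^ (∑ j, w j * m j))
    {k : ι} (hk : MvPolynomial.eval q.ofLp (P k) = 0) (hwH : w k ≤ ∑ j, w j * m j) :
    ‖⟪q, p⟫_ℂ‖ ^ 2 ≤ 1 - w k / ∑ j, w j * m j := by
  set γ := ⟪q, p⟫_ℂ
  set r := p - γ • q
  have hqr : ⟪q, r⟫_ℂ = 0 := inner_sub_inner_smul_eq_zero hq p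
  have hrp : r + γ • q = p := sub_add_cancel p _
  have hnorm : ‖r‖ ^ 2 + ‖γ‖ ^ 2 = 1 := by rw [← norm_add_smul_sq hq hqr, hrp, hp, one_pow]
  rcases (norm_nonneg γ).eq_or_lt with ht | ht
  · rw [← ht]
    have := div_le_one_of_le₀ hwH ((hw k).le.trans hwH)
    linarith
  have hr : 0 < ‖r‖ ^ 2 := by
    refine pow_pos (norm_pos_iff.2 fun hr0 => ?_) 2
    have := (weightedProd_pos_iff (fun j => (hw j).ne')).1 hpos k
    rw [← hrp, hr0, zero_add, WithLp.ofLp_smul, (hP k).eval_smul, hk, mul_zero] at this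
    exact this rfl
  have := div_le_of_forall_rpow_le hr ht hnorm (hw k) hwH fun ρ hρ hργ => by
    have h := rpow_mul_weightedProd_le hP hw hbound hq hqr hk hρ hργ
    rw [← WithLp.ofLp_smul, ← WithLp.ofLp_add, hrp, mul_left_comm, mul_comm (‖γ‖ ^ _)] at h
    exact le_of_mul_le_mul_left h hpos
  linarith

end ZeroAvoidance

lemma arcsin_le_arccos_of_sq_add_sq_le {s t : ℝ} (ht : 0 ≤ t) (h : s ^ 2 + t ^ 2 ≤ 1) :
    arcsin s ≤ arccos t := by
  rw [arccos_eq_arcsin ht]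
  exact monotone_arcsin ((le_abs_self s).trans (abs_le_sqrt (by linarith)))

/-- Let `P₁, …, P_N` be nonzero homogeneous complex polynomials and
`δ₁, …, δ_N > 0` with `∑ δ_k² · deg P_k ≤ 1`. If `p` maximizes `∏ |P_k|^{δ_k²}` on the unit sphere
`S^{2d-1} ⊂ ℂ^d`, then for every `k`, every zero `q ∈ S^{2d-1}` of `P_k` satisfies
`arccos |⟨p,q⟩| ≥ arcsin δ_k`. -/
theorem complex_sphere_weighted_zero_avoidance
    (d N : ℕ) (P : Fin N → MvPolynomial (Fin d) ℂ) (hP : ∀ k, P k ≠ 0)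
    (m : Fin N → ℕ) (hhom : ∀ k, (P k).IsHomogeneous (m k))
    (δ : Fin N → ℝ) (hδ : ∀ k, 0 < δ k)
    (hsum : ∑ k, δ k ^ 2 * m k ≤ 1)
    (p : EuclideanSpace ℂ (Fin d)) (hp : ‖p‖ = 1)
    (hmax : ∀ x : EuclideanSpace ℂ (Fin d), ‖x‖ = 1 →
      ∏ k, ‖MvPolynomial.eval (fun i => x i) (P k)‖ ^ (δ k ^ 2) ≤
        ∏ k, ‖MvPolynomial.eval (fun i => p i) (P k)‖ ^ (δ k ^ 2)) :
    ∀ k, ∀ q : EuclideanSpace ℂ (Fin d), ‖q‖ = 1 → MvPolynomial.eval (fun i => q i) (P k) = 0 →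
      Real.arccos ‖(inner ℂ p q : ℂ)‖ ≥ Real.arcsin (δ k) := by
  intro k q hq hqk
  set w : Fin N → ℝ := fun j => δ j ^ 2
  have hw : ∀ j, 0 < w j := fun j => pow_pos (hδ j) 2
  have : Nonempty (Fin d) := by
    obtain ⟨i, -⟩ : ∃ i, p i ≠ 0 := by
      by_contra! h
      exact ne_zero_of_norm_ne_zero (hp ▸ one_ne_zero) (by ext i; exact h i)
    exact ⟨i⟩
  obtain ⟨y, hy, hy0⟩ := exists_norm_eq_one_forall_eval_ne_zero hhom hP
  have hpos : 0 < weightedProd P w p :=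
    ((weightedProd_pos_iff fun j => (hw j).ne').2 hy0).trans_le (hmax y hy)
  have hm : m k ≠ 0 := (hhom k).ne_zero_of_eval hqk
    ((weightedProd_pos_iff fun j => (hw j).ne').1 hpos k)
  have hwH : w k ≤ ∑ j, w j * m j :=
    (le_mul_of_one_le_right (hw k).le (by exact_mod_cast Nat.one_le_iff_ne_zero.2 hm)).trans
      (single_le_sum (f := fun j => w j * m j) (fun j _ => by positivity) (mem_univ k))
  have h := norm_inner_sq_le_one_sub_div hhom hw hp hq hpos
    (fun x hx => weightedProd_le_mul_norm_rpow hhom (fun j => (hw j).le) hmax hx) hqk hwH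
  have hdiv : w k ≤ w k / ∑ j, w j * m j := le_div_self (hw k).le ((hw k).trans_le hwH) hsum
  rw [ge_iff_le, norm_inner_symm]
  exact arcsin_le_arccos_of_sq_add_sq_le (norm_nonneg _) (by linarith)
end
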